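/- arXiv:2211.00267 — 2 statements merged into one kernel-verified Lean document; each statement's English description precedes it below -/
import Mathlib

section
/- Let K be an algebraically closed valued field, and V, W ⊆ K² definable one-dimensional sets with no isolated points (in the valuation topology), where addition coordinates are combined by V ⊕ W = {(x, y+z) : (x,y) ∈ V, (x,z) ∈ W}. Then V ⊕ W has no isolated points. -/
open MvPolynomial

/-- A set `S ⊆ K²` is constructible of dimension one in the sense given by quantifier
elimination in ACVF: a finite union of sets, each the intersection of a (valuation-)
open set with the zero set of a nonzero polynomial. -/
def OneDimConstructible {K : Type*} [NontriviallyNormedField K]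
    (S : Set (K × K)) : Prop :=
  ∃ (n : ℕ) (U : Fin n → Set (K × K)) (F : Fin n → MvPolynomial (Fin 2) K),
    (∀ i, IsOpen (U i) ∧ F i ≠ 0) ∧
    S = ⋃ i, U i ∩ {z : K × K | MvPolynomial.eval ![z.1, z.2] (F i) = 0}

/-- A point of `S` is isolated if some neighborhood meets `S` only in that point. -/
def NoIsolatedPoints {K : Type*} [NontriviallyNormedField K]
    (S : Set (K × K)) : Prop :=
  ∀ z ∈ S, ∀ O ∈ nhds z, ∃ w ∈ S ∩ O, w ≠ z

/-!
Let `(x, y) ∈ V` and `(x, z) ∈ W`. Take a piece `U ∩ {F = 0}` of `W` through `(x, z)`. If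
`F(x, ·)` vanishes identically, `W` contains a vertical segment through `(x, z)`, and moving
`z` along it moves `y + z`. Otherwise `z` is a root of `F(x, ·)`, and by continuity of roots
every `F(x', ·)` with `x'` close to `x` has a root close to `z`. Since `(x, y)` is not isolated
in `V`, there is `(x', y') ∈ V` close to it: if `x' = x` then `(x, y' + z)` is the required
point of `V ⊕ W`, and otherwise `(x', y' + t)` for a root `t` of `F(x', ·)` close to `z`.
Continuity of roots over an ultrametric algebraically closed field is quantitative: a
polynomial with nonzero `m`-th coefficient has a root `t` with
`‖t‖ ^ m * ‖a_m‖ ≤ ‖a_0‖`, which follows from Vieta's formulas and the ultrametric inequality.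
-/

open Polynomial Filter Topology

theorem Multiset.norm_pow_mul_norm_esymm_le_norm_prod {K : Type*} [NormedField K]
    [IsUltrametricDist K] (s : Multiset K) {k : ℕ} (hk : k ≤ card s) {a : K}
    (ha : ∀ r ∈ s, ‖a‖ ≤ ‖r‖) :
    ‖a‖ ^ (card s - k) * ‖s.esymm k‖ ≤ ‖s.prod‖ := by
  -- `esymm s k` is dominated by one of its terms `s'.prod`; the other factor of `s = s' + u`
  -- has `card s - k` elements, each of norm at least `‖a‖`.
  obtain ⟨s', hs', hesymm⟩ :=
    IsUltrametricDist.exists_norm_multiset_sum_le (s.powersetCard k) (f := Multiset.prod)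
  obtain ⟨hs's, hcard⟩ := mem_powersetCard.1 <| hs' <| by
    simpa [← card_pos, card_powersetCard] using Nat.choose_pos hk
  obtain ⟨u, rfl⟩ := le_iff_exists_add.1 hs's
  have hu : ‖a‖ ^ card u ≤ ‖u.prod‖ := by
    rw [← coe_nnnorm, ← coe_nnnorm, ← NNReal.coe_pow, NNReal.coe_le_coe,
      ← nnnormHom_apply u.prod, map_multiset_prod]
    simpa using pow_card_le_prod (s := u.map nnnormHom) (a := ‖a‖₊) fun _ hr => by
      obtain ⟨b, hb, rfl⟩ := mem_map.1 hr
      exact (ha b (mem_add.2 (Or.inr hb)) : ‖a‖₊ ≤ ‖b‖₊)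
  calc ‖a‖ ^ (card (s' + u) - k) * ‖(s' + u).esymm k‖
      ≤ ‖a‖ ^ card u * ‖s'.prod‖ := by
        rw [card_add, hcard, Nat.add_sub_cancel_left]
        exact mul_le_mul_of_nonneg_left hesymm (by positivity)
    _ ≤ ‖u.prod‖ * ‖s'.prod‖ := mul_le_mul_of_nonneg_right hu (norm_nonneg _)
    _ = ‖(s' + u).prod‖ := by rw [prod_add, norm_mul, mul_comm]

theorem Polynomial.exists_isRoot_norm_pow_mul_le {K : Type*} [NormedField K]
    [IsUltrametricDist K] [IsAlgClosed K] (p : K[X]) {m : ℕ} (hm : 0 < m)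
    (hpm : p.coeff m ≠ 0) : ∃ t, p.IsRoot t ∧ ‖t‖ ^ m * ‖p.coeff m‖ ≤ ‖p.coeff 0‖ := by
  have hcard : Multiset.card p.roots = p.natDegree :=
    splits_iff_card_roots.1 (IsAlgClosed.splits p)
  have hmD : m ≤ p.natDegree := le_natDegree_of_ne_zero hpm
  obtain ⟨t, ht, htmin⟩ := Multiset.exists_min_image norm (s := p.roots) <| by
    simpa [← Multiset.card_pos, hcard] using hm.trans_le hmD
  refine ⟨t, isRoot_of_mem_roots ht, ?_⟩
  have hesymm := p.roots.norm_pow_mul_norm_esymm_le_norm_prod (k := p.natDegree - m)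
    (by omega) htmin
  rw [hcard, Nat.sub_sub_self hmD] at hesymm
  have hprod : p.roots.esymm p.natDegree = p.roots.prod := by
    simp [Multiset.esymm, ← hcard, Multiset.powersetCard_self]
  rw [coeff_eq_esymm_roots_of_card hcard hmD, coeff_eq_esymm_roots_of_card hcard (Nat.zero_le _),
    Nat.sub_zero, hprod]
  simp only [norm_mul, norm_pow, norm_neg, norm_one, one_pow, mul_one]
  calc ‖t‖ ^ m * (‖p.leadingCoeff‖ * ‖p.roots.esymm (p.natDegree - m)‖)
      = ‖p.leadingCoeff‖ * (‖t‖ ^ m * ‖p.roots.esymm (p.natDegree - m)‖) := by ring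
    _ ≤ ‖p.leadingCoeff‖ * ‖p.roots.prod‖ := by gcongr

theorem Polynomial.eventually_exists_isRoot_mem_of_isRoot_zero {X K : Type*}
    [TopologicalSpace X] [NormedField K] [IsUltrametricDist K] [IsAlgClosed K]
    {p : X → K[X]} {x₀ : X} (hp : ∀ k, ContinuousAt (fun x => (p x).coeff k) x₀)
    (hp₀ : p x₀ ≠ 0) (hroot : (p x₀).IsRoot 0) :
    ∀ s ∈ 𝓝 (0 : K), ∀ᶠ x in 𝓝 x₀, ∃ t ∈ s, (p x).IsRoot t := by
  intro s hs
  obtain ⟨ε, hε, hball⟩ := Metric.mem_nhds_iff.1 hs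
  have hcoeff0 : (p x₀).coeff 0 = 0 := by rwa [coeff_zero_eq_eval_zero]
  set m := (p x₀).natDegree
  have hm : 0 < m := Nat.pos_of_ne_zero fun h0 =>
    hp₀ <| by rw [eq_C_of_natDegree_eq_zero h0, hcoeff0, map_zero]
  have hlead : (p x₀).coeff m ≠ 0 := leadingCoeff_ne_zero.2 hp₀
  have hratio : Tendsto (fun x => ‖(p x).coeff 0‖ / ‖(p x).coeff m‖) (𝓝 x₀)
      (𝓝 (‖(p x₀).coeff 0‖ / ‖(p x₀).coeff m‖)) :=
    (hp 0).norm.tendsto.div (hp m).norm.tendsto (norm_ne_zero_iff.2 hlead)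
  rw [hcoeff0, norm_zero, zero_div] at hratio
  filter_upwards [hratio.eventually (gt_mem_nhds (pow_pos hε m)),
    (hp m).eventually_ne hlead] with x hsmall hne
  obtain ⟨t, ht, hbound⟩ := (p x).exists_isRoot_norm_pow_mul_le hm hne
  refine ⟨t, hball ?_, ht⟩
  rw [div_lt_iff₀ (norm_pos_iff.2 hne)] at hsmall
  rw [mem_ball_zero_iff]
  exact lt_of_pow_lt_pow_left₀ m hε.le <|
    lt_of_mul_lt_mul_right (hbound.trans_lt hsmall) (norm_nonneg _)

theorem Polynomial.eventually_exists_isRoot_map_evalRingHom {K : Type*} [NormedField K]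
    [IsUltrametricDist K] [IsAlgClosed K] (B : K[X][X]) {x z : K}
    (hB : B.map (evalRingHom x) ≠ 0) (hz : (B.map (evalRingHom x)).IsRoot z) :
    ∀ v ∈ 𝓝 z, ∀ᶠ x' in 𝓝 x, ∃ t ∈ v, (B.map (evalRingHom x')).IsRoot t := by
  intro v hv
  have hcoeff (x' : K) (k : ℕ) :
      (taylor z (B.map (evalRingHom x'))).coeff k = ((taylor (C z) B).coeff k).eval x' := by
    rw [← coe_evalRingHom, ← coeff_map, map_taylor, coe_evalRingHom, eval_C]
  have hshift : (· + z) ⁻¹' v ∈ 𝓝 (0 : K) :=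
    (continuous_add_const z).continuousAt.preimage_mem_nhds (by rwa [zero_add])
  filter_upwards [eventually_exists_isRoot_mem_of_isRoot_zero
    (p := fun x' => taylor z (B.map (evalRingHom x')))
    (fun k => by simpa only [hcoeff] using (Polynomial.continuous _).continuousAt)
    (by rwa [Ne, taylor_eq_zero]) (by rwa [IsRoot, taylor_eval, zero_add]) _ hshift]
    with x' ⟨t, ht, hroot⟩
  exact ⟨t + z, ht, by rwa [IsRoot, taylor_eval] at hroot⟩

theorem MvPolynomial.eval_map_evalRingHom_aeval {K : Type*} [CommRing K]
    (F : MvPolynomial (Fin 2) K) (x y : K) :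
    ((aeval (![Polynomial.C Polynomial.X, Polynomial.X] : Fin 2 → K[X][X]) F).map
      (evalRingHom x)).eval y = eval ![x, y] F := by
  induction F using MvPolynomial.induction_on with
  | C c => simp
  | add p q hp hq => simp [hp, hq]
  | mul_X p i hp => fin_cases i <;> simp [hp]

def planeZeroSet {K : Type*} [CommSemiring K] (F : MvPolynomial (Fin 2) K) : Set (K × K) :=
  {p | eval ![p.1, p.2] F = 0}

theorem vertical_or_eventually_exists_mem_of_mem_inter_planeZeroSet {K : Type*} [NormedField K]
    [IsUltrametricDist K] [IsAlgClosed K] {U : Set (K × K)} (hU : IsOpen U)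
    {F : MvPolynomial (Fin 2) K} {x z : K} (hxz : (x, z) ∈ U ∩ planeZeroSet F) :
    (∀ᶠ c in 𝓝 z, (x, c) ∈ U ∩ planeZeroSet F) ∨
      ∀ v ∈ 𝓝 z, ∀ᶠ x' in 𝓝 x, ∃ t ∈ v, (x', t) ∈ U ∩ planeZeroSet F := by
  set B : K[X][X] := aeval ![Polynomial.C Polynomial.X, Polynomial.X] F
  have hfiber (x' t : K) : (B.map (evalRingHom x')).IsRoot t ↔ (x', t) ∈ planeZeroSet F := by
    rw [IsRoot, eval_map_evalRingHom_aeval]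
    rfl
  obtain ⟨a, ha, b, hb, hab⟩ := mem_nhds_prod_iff.1 (hU.mem_nhds hxz.1)
  by_cases h0 : B.map (evalRingHom x) = 0
  · left
    filter_upwards [hb] with c hc
    exact ⟨hab ⟨mem_of_mem_nhds ha, hc⟩, (hfiber x c).1 (by simp [h0])⟩
  · right
    intro v hv
    filter_upwards [ha, eventually_exists_isRoot_map_evalRingHom B h0 ((hfiber x z).2 hxz.2) _
      (inter_mem hv hb)] with x' hx' ⟨t, ⟨htv, htb⟩, ht⟩
    exact ⟨t, htv, hab ⟨hx', htb⟩, (hfiber x' t).1 ht⟩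

theorem OneDimConstructible.vertical_or_eventually_exists_mem {K : Type*}
    [NontriviallyNormedField K] [IsUltrametricDist K] [IsAlgClosed K] {W : Set (K × K)}
    (hW : OneDimConstructible W) {x z : K} (hxz : (x, z) ∈ W) :
    (∀ᶠ c in 𝓝 z, (x, c) ∈ W) ∨ ∀ v ∈ 𝓝 z, ∀ᶠ x' in 𝓝 x, ∃ t ∈ v, (x', t) ∈ W := by
  obtain ⟨n, U, F, hUF, rfl⟩ := hW
  obtain ⟨j, hj⟩ := Set.mem_iUnion.1 hxz
  have hsub : U j ∩ planeZeroSet (F j) ⊆ _ :=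
    Set.subset_iUnion (fun i => U i ∩ planeZeroSet (F i)) j
  exact (vertical_or_eventually_exists_mem_of_mem_inter_planeZeroSet (hUF j).1 hj).imp
    (fun h => h.mono fun _ hc => hsub hc)
    fun h v hv => (h v hv).mono fun _ ⟨t, htv, ht⟩ => ⟨t, htv, hsub ht⟩

theorem stmt15_general {K : Type*} [NontriviallyNormedField K] [IsAlgClosed K]
    [IsUltrametricDist K] (V W : Set (K × K))
    (hW : OneDimConstructible W)
    (hVni : NoIsolatedPoints V) :
    NoIsolatedPoints {q : K × K | ∃ y z : K, (q.1, y) ∈ V ∧ (q.1, z) ∈ W ∧ q.2 = y + z}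
    := by
  rintro ⟨x, _⟩ ⟨y, z, hy, hz, rfl⟩ O hO
  have hsum : ∀ᶠ q : (K × K) × K in 𝓝 ((x, y), z), (q.1.1, q.1.2 + q.2) ∈ O :=
    ContinuousAt.eventually_mem (by fun_prop) hO
  obtain ⟨u, hu, v, hv, huv⟩ := mem_nhds_prod_iff.1 hsum
  rcases hW.vertical_or_eventually_exists_mem hz with hvert | hnear
  · obtain ⟨c, ⟨hcW, hcv⟩, hcz⟩ :=
      (((hvert.and hv).filter_mono (nhdsWithin_le_nhds (s := {z}ᶜ))).and
        eventually_mem_nhdsWithin).exists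
    exact ⟨(x, y + c), ⟨⟨y, c, hy, hcW, rfl⟩, huv (Set.mk_mem_prod (mem_of_mem_nhds hu) hcv)⟩,
      by simpa using hcz⟩
  · obtain ⟨⟨x', y'⟩, ⟨hV', hu', t, htv, htW⟩, hne⟩ :=
      hVni (x, y) hy _ (inter_mem hu (continuousAt_fst.preimage_mem_nhds (hnear v hv)))
    by_cases hx : x' = x
    · subst hx
      exact ⟨(x', y' + z), ⟨⟨y', z, hV', hz, rfl⟩, huv (Set.mk_mem_prod hu' (mem_of_mem_nhds hv))⟩,
        by simpa using hne⟩
    · exact ⟨(x', y' + t), ⟨⟨y', t, hV', htW, rfl⟩, huv (Set.mk_mem_prod hu' htv)⟩,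
        fun h => hx (congrArg Prod.fst h)⟩

/-- If `V, W ⊆ K²` are definable one-dimensional sets with no isolated points over an
algebraically closed nonarchimedean valued field, then
`V ⊕ W = {(x, y+z) : (x,y) ∈ V, (x,z) ∈ W}` has no isolated points. -/
theorem stmt15 {K : Type*} [NontriviallyNormedField K] [IsAlgClosed K]
    [IsUltrametricDist K] (V W : Set (K × K))
    (hV : OneDimConstructible V) (hW : OneDimConstructible W)
    (hVni : NoIsolatedPoints V) (hWni : NoIsolatedPoints W) :
    NoIsolatedPoints {q : K × K | ∃ y z : K, (q.1, y) ∈ V ∧ (q.1, z) ∈ W ∧ q.2 = y + z} :=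
  stmt15_general V W hW hVni
end

section
/- Let K be an algebraically closed field and F, G ∈ K[x,y] nonzero polynomials with no common non-constant divisor. Then the set of common zeros of F and G in K² is finite, of cardinality at most deg(F)·deg(G). -/
/-!
Fulton's dimension count. Let `m = deg F`, `n = deg G`, let `s` be a finite set of common zeros,
`N = #s`, and write `R_k` for the polynomials of total degree at most `k`. Polynomials in `R_d`,
`d = m + n + N`, take arbitrary values on `s`, so evaluation on `s` has a kernel of codimension `N`
in `R_d`; that kernel contains `F • R_{n+N} + G • R_{m+N}`. Coprimality gives
`F • R_{n+N} ∩ G • R_{m+N} ⊆ FG • R_N`, hence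
`dim R_{n+N} + dim R_{m+N} + N ≤ dim R_d + dim R_N`,
and in two variables `dim R_k = (k+1)(k+2)/2` turns this into `N ≤ mn`.
-/

open MvPolynomial Finset Module

theorem Set.finite_and_ncard_le_of_forall_finset_card_le {α : Type*} {S : Set α} {n : ℕ}
    (h : ∀ t : Finset α, ↑t ⊆ S → #t ≤ n) : S.Finite ∧ S.ncard ≤ n := by
  have hS : S.Finite := by
    by_contra hS
    obtain ⟨t, htS, ht⟩ := Set.Infinite.exists_subset_card_eq hS (n + 1)
    have := h t htS
    omega
  refine ⟨hS, ?_⟩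
  rw [Set.ncard_eq_toFinset_card S hS]
  exact h _ (by simp)

theorem Submodule.finrank_add_finrank_add_finrank_le_of_le_ker {K V U : Type*} [DivisionRing K]
    [AddCommGroup V] [Module K V] [AddCommGroup U] [Module K U] {W A B : Submodule K V}
    [FiniteDimensional K W] (f : V →ₗ[K] U) (hW : W.map f = ⊤) (hABW : A ⊔ B ≤ W)
    (hABf : A ⊔ B ≤ LinearMap.ker f) :
    finrank K A + finrank K B + finrank K U ≤ finrank K W + finrank K ↥(A ⊓ B) := by
  have : FiniteDimensional K A := Submodule.finiteDimensional_of_le (le_sup_left.trans hABW)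
  have : FiniteDimensional K B := Submodule.finiteDimensional_of_le (le_sup_right.trans hABW)
  have hrank := (f.domRestrict W).finrank_range_add_finrank_ker
  rw [LinearMap.range_domRestrict, hW, finrank_top] at hrank
  have hker : finrank K ↥(A ⊔ B) ≤ finrank K (LinearMap.ker (f.domRestrict W)) := by
    rw [← (Submodule.comapSubtypeEquivOfLe hABW).finrank_eq]
    exact Submodule.finrank_mono fun x hx => hABf hx
  have := Submodule.finrank_sup_add_finrank_inf_eq A B
  omega

namespace MvPolynomial

variable {σ K : Type*} [Field K]

noncomputable def evalOn (s : Finset (σ → K)) : MvPolynomial σ K →ₗ[K] (s → K) :=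
  LinearMap.pi fun x => (aeval x.1).toLinearMap

@[simp]
theorem evalOn_apply (s : Finset (σ → K)) (P : MvPolynomial σ K) (x : s) :
    evalOn s P x = eval x.1 P := by
  simp [evalOn]

theorem exists_totalDegree_le_one_eval_eq_one_eval_eq_zero {x y : σ → K} (hxy : x ≠ y) :
    ∃ P : MvPolynomial σ K, P.totalDegree ≤ 1 ∧ eval x P = 1 ∧ eval y P = 0 := by
  obtain ⟨i, hi⟩ := Function.ne_iff.mp hxy
  refine ⟨C (x i - y i)⁻¹ * (X i - C (y i)), ?_, ?_, by simp⟩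
  · calc _ ≤ (C (x i - y i)⁻¹ : MvPolynomial σ K).totalDegree + (X i - C (y i)).totalDegree :=
          totalDegree_mul _ _
      _ ≤ 0 + 1 := add_le_add (totalDegree_C _).le
          ((totalDegree_sub_C_le _ _).trans (totalDegree_X i).le)
  · simp [inv_mul_cancel₀ (sub_ne_zero.2 hi)]

open scoped Classical in
theorem exists_totalDegree_le_eval_eq_ite {s : Finset (σ → K)} {x : σ → K} (hx : x ∈ s) :
    ∃ P : MvPolynomial σ K, P.totalDegree ≤ #s - 1 ∧
      ∀ y ∈ s, eval y P = if x = y then 1 else 0 := by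
  choose! P hPdeg hPx hPy using
    fun y (hxy : x ≠ y) => exists_totalDegree_le_one_eval_eq_one_eval_eq_zero hxy
  refine ⟨∏ y ∈ s.erase x, P y, ?_, fun y hy => ?_⟩
  · calc _ ≤ ∑ y ∈ s.erase x, (P y).totalDegree := totalDegree_finsetProd _ _
      _ ≤ ∑ _y ∈ s.erase x, 1 := sum_le_sum fun y hy => hPdeg y (ne_of_mem_erase hy).symm
      _ = #s - 1 := by rw [sum_const, smul_eq_mul, mul_one, card_erase_of_mem hx]
  rw [map_prod]
  split_ifs with hxy
  · subst hxy
    exact prod_eq_one fun z hz => hPx z (ne_of_mem_erase hz).symm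
  · exact prod_eq_zero (mem_erase.2 ⟨Ne.symm hxy, hy⟩) (hPy y hxy)

theorem map_evalOn_restrictTotalDegree_eq_top {s : Finset (σ → K)} {d : ℕ} (hd : #s ≤ d + 1) :
    (restrictTotalDegree σ K d).map (evalOn s) = ⊤ := by
  classical
  refine Submodule.eq_top_iff'.2 fun v => ?_
  rw [pi_eq_sum_univ v]
  refine Submodule.sum_mem _ fun x _ => Submodule.smul_mem _ _ ?_
  obtain ⟨P, hPdeg, hPeval⟩ := exists_totalDegree_le_eval_eq_ite x.2
  refine ⟨P, (mem_restrictTotalDegree _ _ _).2 (by omega), ?_⟩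
  ext y
  rw [evalOn_apply, hPeval y y.2]
  exact if_congr Subtype.coe_inj rfl rfl

theorem map_mulLeft_restrictTotalDegree_le (F : MvPolynomial σ K) {k d : ℕ}
    (h : F.totalDegree + k ≤ d) :
    (restrictTotalDegree σ K k).map (LinearMap.mulLeft K F) ≤ restrictTotalDegree σ K d := by
  rintro _ ⟨P, hP, rfl⟩
  rw [SetLike.mem_coe, mem_restrictTotalDegree] at hP
  exact (mem_restrictTotalDegree _ _ _).2 ((totalDegree_mul F P).trans (by omega))

theorem map_mulLeft_le_ker_evalOn {F : MvPolynomial σ K} {s : Finset (σ → K)}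
    (hs : ∀ x ∈ s, eval x F = 0) (p : Submodule K (MvPolynomial σ K)) :
    p.map (LinearMap.mulLeft K F) ≤ LinearMap.ker (evalOn s) := by
  rintro _ ⟨P, -, rfl⟩
  ext x
  simp [hs x x.2]

theorem map_mulLeft_restrictTotalDegree_inf_map_mulLeft_le {F G : MvPolynomial σ K} (hG : G ≠ 0)
    (hFG : IsRelPrime F G) (N : ℕ) (q : Submodule K (MvPolynomial σ K)) :
    (restrictTotalDegree σ K (G.totalDegree + N)).map (LinearMap.mulLeft K F) ⊓
        q.map (LinearMap.mulLeft K G) ≤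
      (restrictTotalDegree σ K N).map (LinearMap.mulLeft K (F * G)) := by
  rintro _ ⟨⟨P, hP, rfl⟩, ⟨Q, -, hQ⟩⟩
  rw [SetLike.mem_coe, mem_restrictTotalDegree] at hP
  obtain ⟨U, rfl⟩ := hFG.symm.dvd_of_dvd_mul_left ⟨Q, hQ.symm⟩
  have hU : U.totalDegree ≤ N := by
    rcases eq_or_ne U 0 with rfl | hU
    · simp
    · rw [totalDegree_mul_of_isDomain hG hU] at hP
      omega
  exact ⟨U, (mem_restrictTotalDegree _ _ _).2 hU, by simp⟩

theorem isRelPrime_of_forall_dvd_totalDegree_eq_zero {F G : MvPolynomial σ K} (hF : F ≠ 0)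
    (h : ∀ d : MvPolynomial σ K, d ∣ F → d ∣ G → d.totalDegree = 0) : IsRelPrime F G := by
  intro d hdF hdG
  have hd := h d hdF hdG
  have hd0 : d ≠ 0 := by rintro rfl; exact hF (zero_dvd_iff.1 hdF)
  refine isUnit_iff_totalDegree_of_isReduced.2 ⟨IsUnit.mk0 _ fun h => hd0 ?_, hd⟩
  rw [totalDegree_eq_zero_iff_eq_C.1 hd, h, C_0]

theorem finrank_restrictTotalDegree_add_card_le [Finite σ] {F G : MvPolynomial σ K} (hF : F ≠ 0) (hG : G ≠ 0)
    (hFG : IsRelPrime F G) {s : Finset (σ → K)} (hs : ∀ x ∈ s, eval x F = 0 ∧ eval x G = 0)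
    {N : ℕ} (hN : #s ≤ F.totalDegree + G.totalDegree + N + 1) :
    finrank K (restrictTotalDegree σ K (G.totalDegree + N)) +
        finrank K (restrictTotalDegree σ K (F.totalDegree + N)) + #s ≤
      finrank K (restrictTotalDegree σ K (F.totalDegree + G.totalDegree + N)) +
        finrank K (restrictTotalDegree σ K N) := by
  set A := (restrictTotalDegree σ K (G.totalDegree + N)).map (LinearMap.mulLeft K F)
  set B := (restrictTotalDegree σ K (F.totalDegree + N)).map (LinearMap.mulLeft K G)
  have hA : finrank K A = finrank K (restrictTotalDegree σ K (G.totalDegree + N)) :=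
    (Submodule.equivMapOfInjective _ (mul_right_injective₀ hF) _).finrank_eq.symm
  have hB : finrank K B = finrank K (restrictTotalDegree σ K (F.totalDegree + N)) :=
    (Submodule.equivMapOfInjective _ (mul_right_injective₀ hG) _).finrank_eq.symm
  have hAB : finrank K ↥(A ⊓ B) ≤ finrank K (restrictTotalDegree σ K N) :=
    (Submodule.finrank_mono (map_mulLeft_restrictTotalDegree_inf_map_mulLeft_le hG hFG N _)).trans
      (Submodule.finrank_map_le _ _)
  have key := Submodule.finrank_add_finrank_add_finrank_le_of_le_ker
    (W := restrictTotalDegree σ K (F.totalDegree + G.totalDegree + N)) (evalOn s)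
    (map_evalOn_restrictTotalDegree_eq_top hN)
    (sup_le (map_mulLeft_restrictTotalDegree_le F (k := G.totalDegree + N) (by omega))
      (map_mulLeft_restrictTotalDegree_le G (k := F.totalDegree + N) (by omega)))
    (sup_le (map_mulLeft_le_ker_evalOn (fun x hx => (hs x hx).1) _)
      (map_mulLeft_le_ker_evalOn (fun x hx => (hs x hx).2) _))
  rw [finrank_fintype_fun_eq_card, Fintype.card_coe] at key
  calc _ = finrank K A + finrank K B + #s := by rw [hA, hB]
    _ ≤ _ := key
    _ ≤ _ := Nat.add_le_add_left hAB _

theorem finrank_restrictTotalDegree [Fintype σ] (d : ℕ) :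
    finrank K (restrictTotalDegree σ K d) =
      ∑ k ∈ range (d + 1), (Fintype.card σ).multichoose k := by
  classical
  have hsupp : {n : σ →₀ ℕ | (n.sum fun _ e => e) ≤ d} =
      ↑((range (d + 1)).biUnion fun k => (univ : Finset σ).finsuppAntidiag k) := by
    ext n
    simp [mem_finsuppAntidiag, Finsupp.sum_fintype]
  rw [restrictTotalDegree, hsupp, finrank_eq_card_basis (basisRestrictSupport K _)]
  simp only [Finset.coe_sort_coe, Fintype.card_coe]
  rw [card_biUnion]
  · simp [card_finsuppAntidiag_nat_eq_multichoose]
  · intro i _ j _ hij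
    simp only [Function.onFun, disjoint_left, mem_finsuppAntidiag]
    rintro n ⟨rfl, -⟩ ⟨h, -⟩
    exact hij h

theorem two_mul_finrank_restrictTotalDegree_fin_two (d : ℕ) :
    2 * finrank K (restrictTotalDegree (Fin 2) K d) = (d + 1) * (d + 2) := by
  rw [finrank_restrictTotalDegree, Fintype.card_fin]
  simp only [Nat.multichoose_two]
  induction d with
  | zero => rfl
  | succ d ih => rw [sum_range_succ, mul_add, ih]; ring

theorem card_le_totalDegree_mul_totalDegree {F G : MvPolynomial (Fin 2) K} (hF : F ≠ 0)
    (hG : G ≠ 0) (hFG : IsRelPrime F G) {s : Finset (Fin 2 → K)}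
    (hs : ∀ x ∈ s, eval x F = 0 ∧ eval x G = 0) : #s ≤ F.totalDegree * G.totalDegree := by
  have key := finrank_restrictTotalDegree_add_card_le hF hG hFG hs (N := #s) (by omega)
  have h₁ := two_mul_finrank_restrictTotalDegree_fin_two (K := K) (G.totalDegree + #s)
  have h₂ := two_mul_finrank_restrictTotalDegree_fin_two (K := K) (F.totalDegree + #s)
  have h₃ := two_mul_finrank_restrictTotalDegree_fin_two (K := K)
    (F.totalDegree + G.totalDegree + #s)
  have h₄ := two_mul_finrank_restrictTotalDegree_fin_two (K := K) #s
  nlinarith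

end MvPolynomial

theorem stmt18_general {K : Type*} [Field K]
    (F G : MvPolynomial (Fin 2) K) (hF : F ≠ 0) (hG : G ≠ 0)
    (hcop : ∀ d : MvPolynomial (Fin 2) K, d ∣ F → d ∣ G → d.totalDegree = 0) :
    {z : K × K | MvPolynomial.eval ![z.1, z.2] F = 0 ∧
        MvPolynomial.eval ![z.1, z.2] G = 0}.Finite ∧
      {z : K × K | MvPolynomial.eval ![z.1, z.2] F = 0 ∧
        MvPolynomial.eval ![z.1, z.2] G = 0}.ncard ≤ F.totalDegree * G.totalDegree := by
  have hFG : IsRelPrime F G := isRelPrime_of_forall_dvd_totalDegree_eq_zero hF hcop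
  refine Set.finite_and_ncard_le_of_forall_finset_card_le fun t ht => ?_
  rw [← card_map (finTwoArrowEquiv K).symm.toEmbedding]
  refine card_le_totalDegree_mul_totalDegree hF hG hFG fun x hx => ?_
  obtain ⟨z, hz, rfl⟩ := mem_map.1 hx
  exact ht hz

/-- Bézout's theorem (affine inequality form): over an algebraically closed field, two
nonzero polynomials `F, G ∈ K[x,y]` with no common non-constant divisor have at most
`deg F · deg G` common zeros in `K²`; in particular their set of common zeros is
finite. -/
theorem stmt18 {K : Type*} [Field K] [IsAlgClosed K]
    (F G : MvPolynomial (Fin 2) K) (hF : F ≠ 0) (hG : G ≠ 0)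
    (hcop : ∀ d : MvPolynomial (Fin 2) K, d ∣ F → d ∣ G → d.totalDegree = 0) :
    {z : K × K | MvPolynomial.eval ![z.1, z.2] F = 0 ∧
        MvPolynomial.eval ![z.1, z.2] G = 0}.Finite ∧
      {z : K × K | MvPolynomial.eval ![z.1, z.2] F = 0 ∧
        MvPolynomial.eval ![z.1, z.2] G = 0}.ncard ≤ F.totalDegree * G.totalDegree :=
  stmt18_general F G hF hG hcop
end
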